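/- For λ ≠ 0, the transformation Φ(x,y,u,p,q) = (−λ(x + 1/p), −(y + 1/(λq)), −u + ln(−p) + (1/λ)ln(−q), p/λ, q) is a contact transformation of the contact structure ker(du − p dx − q dy) on (an open subset of) C^5 that interchanges the two distributions E and V of the ILC structure given by u_{11} = p², u_{12} = 0, u_{22} = λq²; i.e. Φ pulls back du − p dx − q dy to a nonzero multiple of itself, maps V = span{∂_p, ∂_q} onto E = span{∂_x + p∂_u + p²∂_p, ∂_y + q∂_u + λq²∂_q}, and maps E onto V. Hence the ILC structure S_λ is self-dual. -/

import Mathlib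

-- Coordinates on ℂ^5: (x, y, u, p, q) = (z 0, z 1, z 2, z 3, z 4).

/-- `D_1 = ∂_x + p∂_u + p²∂_p` for the system `u₁₁ = p², u₁₂ = 0, u₂₂ = λq²`. -/
noncomputable def D1 : (Fin 5 → ℂ) → Fin 5 → ℂ :=
  fun z => ![1, 0, z 3, (z 3) ^ 2, 0]

/-- `D_2 = ∂_y + q∂_u + λq²∂_q`. -/
noncomputable def D2 (lam : ℂ) : (Fin 5 → ℂ) → Fin 5 → ℂ :=
  fun z => ![0, 1, z 4, 0, lam * (z 4) ^ 2]

/-- The contact form `du − p dx − q dy` at `z`, evaluated on the tangent vector `v`. -/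
noncomputable def ctForm (z v : Fin 5 → ℂ) : ℂ := v 2 - z 3 * v 0 - z 4 * v 1

/-- The self-duality map
`Φ(x,y,u,p,q) = (−λ(x+1/p), −(y+1/(λq)), −u + ln(−p) + (1/λ)ln(−q), p/λ, q)`. -/
noncomputable def PhiSD (lam : ℂ) : (Fin 5 → ℂ) → Fin 5 → ℂ :=
  fun z => ![-lam * (z 0 + 1 / z 3), -(z 1 + 1 / (lam * z 4)),
    -z 2 + Complex.log (-z 3) + (1 / lam) * Complex.log (-z 4), z 3 / lam, z 4]

/-! The differential of `Φ` is explicit wherever `log (-p)` and `log (-q)` are holomorphic,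
and `Φ` pulls the contact form back to its negative. On the two frames the differential is
diagonal up to nonzero factors: `dΦ ∂_p = (λ/p²) D₁`, `dΦ ∂_q = (λq²)⁻¹ D₂` (at `Φ z`), and
`dΦ D₁ = (p²/λ) ∂_p`, `dΦ D₂ = λq² ∂_q`. -/

open Complex ContinuousLinearMap

theorem Submodule.span_pair_smul_eq {R M : Type*} [Semiring R] [AddCommMonoid M] [Module R M]
    {c d : R} (hc : IsUnit c) (hd : IsUnit d) (a b : M) :
    span R {c • a, d • b} = span R {a, b} := by
  rw [span_insert, span_insert, span_singleton_smul_eq hc, span_singleton_smul_eq hd]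

theorem Complex.ne_zero_of_neg_mem_slitPlane {w : ℂ} (h : -w ∈ slitPlane) : w ≠ 0 :=
  fun hw => slitPlane_ne_zero h (by simp [hw])

namespace D7

noncomputable def dPhiSD (lam p q : ℂ) : (Fin 5 → ℂ) →L[ℂ] Fin 5 → ℂ :=
  pi ![(-lam) • proj 0 + (lam / p ^ 2) • proj 3,
    -proj 1 + (lam * q ^ 2)⁻¹ • proj 4,
    -proj 2 + p⁻¹ • proj 3 + (lam * q)⁻¹ • proj 4,
    lam⁻¹ • proj 3,
    proj 4]

@[simp]
theorem dPhiSD_apply (lam p q : ℂ) (v : Fin 5 → ℂ) :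
    dPhiSD lam p q v = ![-lam * v 0 + lam / p ^ 2 * v 3, -v 1 + (lam * q ^ 2)⁻¹ * v 4,
      -v 2 + p⁻¹ * v 3 + (lam * q)⁻¹ * v 4, lam⁻¹ * v 3, v 4] := by
  ext i
  fin_cases i <;> simp [dPhiSD]

variable {lam : ℂ} {z : Fin 5 → ℂ}

theorem hasFDerivAt_PhiSD (hlam : lam ≠ 0) (hp : -z 3 ∈ slitPlane) (hq : -z 4 ∈ slitPlane) :
    HasFDerivAt (PhiSD lam) (dPhiSD lam (z 3) (z 4)) z := by
  have hp0 := ne_zero_of_neg_mem_slitPlane hp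
  have hq0 := ne_zero_of_neg_mem_slitPlane hq
  have coord (i : Fin 5) : HasFDerivAt (fun w : Fin 5 → ℂ => w i) (proj (R := ℂ) i) z :=
    hasFDerivAt_apply i z
  refine hasFDerivAt_pi'' fun i => ?_
  rw [dPhiSD, proj_pi]
  fin_cases i <;> simp only [Fin.zero_eta, Fin.mk_one, Fin.reduceFinMk, Matrix.cons_val]
  · refine (((coord 0).add ((hasDerivAt_inv hp0).comp_hasFDerivAt z (coord 3))).const_mul
      (-lam) |>.congr_of_eventuallyEq (.of_forall fun w => ?_)).congr_fderiv ?_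
    · simp [PhiSD]
    · ext v; simp only [add_apply, smul_apply, proj_apply, smul_eq_mul]; field
  · refine (((coord 1).add ((hasDerivAt_inv (mul_ne_zero hlam hq0)).comp_hasFDerivAt z
      ((coord 4).const_mul lam))).neg.congr_of_eventuallyEq
      (.of_forall fun w => ?_)).congr_fderiv ?_
    · simp [PhiSD]
    · ext v; simp only [add_apply, neg_apply, smul_apply, proj_apply, smul_eq_mul]; field
  · refine ((((coord 2).neg.add ((hasDerivAt_log hp).comp_hasFDerivAt z (coord 3).neg)).add
      (((hasDerivAt_log hq).comp_hasFDerivAt z (coord 4).neg).const_mul lam⁻¹))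
      |>.congr_of_eventuallyEq (.of_forall fun w => ?_)).congr_fderiv ?_
    · simp [PhiSD]
    · ext v; simp only [add_apply, neg_apply, smul_apply, proj_apply, smul_eq_mul]; field
  · refine (((coord 3).mul_const lam⁻¹).congr_of_eventuallyEq
      (.of_forall fun w => ?_)).congr_fderiv ?_
    · simp [PhiSD, div_eq_mul_inv]
    · ext v; simp only [smul_apply, proj_apply, smul_eq_mul]
  · exact coord 4

theorem ctForm_dPhiSD (hlam : lam ≠ 0) (hp : z 3 ≠ 0) (hq : z 4 ≠ 0) (v : Fin 5 → ℂ) :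
    ctForm (PhiSD lam z) (dPhiSD lam (z 3) (z 4) v) = -ctForm z v := by
  simp only [ctForm, PhiSD, dPhiSD_apply, Matrix.cons_val]
  field

theorem dPhiSD_single_three (hlam : lam ≠ 0) (hp : z 3 ≠ 0) :
    dPhiSD lam (z 3) (z 4) (Pi.single 3 1) = (lam / z 3 ^ 2) • D1 (PhiSD lam z) := by
  ext i; fin_cases i <;> simp [D1, PhiSD] <;> field

theorem dPhiSD_single_four (hlam : lam ≠ 0) (hq : z 4 ≠ 0) :
    dPhiSD lam (z 3) (z 4) (Pi.single 4 1) = (lam * z 4 ^ 2)⁻¹ • D2 lam (PhiSD lam z) := by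
  ext i; fin_cases i <;> simp [D2, PhiSD] <;> field

theorem dPhiSD_D1 (hp : z 3 ≠ 0) :
    dPhiSD lam (z 3) (z 4) (D1 z) = (z 3 ^ 2 / lam) • Pi.single 3 1 := by
  ext i; fin_cases i <;> simp [D1] <;> field

theorem dPhiSD_D2 (hlam : lam ≠ 0) (hq : z 4 ≠ 0) :
    dPhiSD lam (z 3) (z 4) (D2 lam z) = (lam * z 4 ^ 2) • Pi.single 4 1 := by
  ext i; fin_cases i <;> simp [D2] <;> field

end D7

open D7

/-- **Self-duality of the model D.7 (`λ ≠ 0`):** on the open set where `−p` and `−q` lie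
in the slit plane, `Φ` is a contact transformation (it pulls back the contact form to a
nonzero multiple of itself) whose differential maps `V = span{∂_p, ∂_q}` onto
`E = span{D₁, D₂}` and `E` onto `V`.  Hence the ILC structure `S_λ` is self-dual. -/
theorem D7_self_dual (lam : ℂ) (hlam : lam ≠ 0) :
    ∀ z : Fin 5 → ℂ, -z 3 ∈ Complex.slitPlane → -z 4 ∈ Complex.slitPlane →
      (∃ c : ℂ, c ≠ 0 ∧ ∀ v : Fin 5 → ℂ,
        ctForm (PhiSD lam z) (fderiv ℂ (PhiSD lam) z v) = c * ctForm z v) ∧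
      Submodule.map (fderiv ℂ (PhiSD lam) z : (Fin 5 → ℂ) →ₗ[ℂ] Fin 5 → ℂ)
          (Submodule.span ℂ {(Pi.single 3 1 : Fin 5 → ℂ), Pi.single 4 1})
        = Submodule.span ℂ {D1 (PhiSD lam z), D2 lam (PhiSD lam z)} ∧
      Submodule.map (fderiv ℂ (PhiSD lam) z : (Fin 5 → ℂ) →ₗ[ℂ] Fin 5 → ℂ) (Submodule.span ℂ {D1 z, D2 lam z})
        = Submodule.span ℂ {(Pi.single 3 1 : Fin 5 → ℂ), Pi.single 4 1} := by
  intro z hp hq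
  have hp0 := ne_zero_of_neg_mem_slitPlane hp
  have hq0 := ne_zero_of_neg_mem_slitPlane hq
  rw [(hasFDerivAt_PhiSD hlam hp hq).fderiv, Submodule.map_span, Submodule.map_span,
    Set.image_pair, Set.image_pair, coe_coe]
  refine ⟨⟨-1, by norm_num, fun v => by rw [ctForm_dPhiSD hlam hp0 hq0, neg_one_mul]⟩,
    ?_, ?_⟩
  · rw [dPhiSD_single_three hlam hp0, dPhiSD_single_four hlam hq0]
    exact Submodule.span_pair_smul_eq (by simp [hlam, hp0]) (by simp [hlam, hq0]) _ _
  · rw [dPhiSD_D1 hp0, dPhiSD_D2 hlam hq0]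
    exact Submodule.span_pair_smul_eq (by simp [hlam, hp0]) (by simp [hlam, hq0]) _ _
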